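/- arXiv:2211.05003 — 3 statements merged into one kernel-verified Lean document; each statement's English description precedes it below -/
import Mathlib

section
/- Let a, b ∈ ℝ with 0 < a < 1 and b > 0. Then there exists a unique s > 0 such that s = −2 · log₁₀(a + b·s). Equivalently, for pipe roughness ε > 0, diameter d > 0 with ε/(3.7·d) < 1, and Reynolds number Re > 0, there exists a unique friction factor λ > 0 satisfying the Colebrook–White equation 1/√λ = −2 · log₁₀( ε/(3.7·d) + 2.51/(Re·√λ) ) (take a = ε/(3.7·d), b = 2.51/Re, s = 1/√λ). -/
/-- For `0 < a < 1` and `b > 0`, the Colebrook–White fixed-point equation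
`s = -2 * log₁₀ (a + b * s)` has a unique positive solution. -/
theorem colebrook_white_unique_solution
    (a b : ℝ) (ha0 : 0 < a) (ha1 : a < 1) (hb : 0 < b) :
    ∃! s : ℝ, 0 < s ∧ s = -2 * Real.logb 10 (a + b * s) := by
  have h10 : (1:ℝ) < 10 := by norm_num
  set f : ℝ → ℝ := fun s => s + 2 * Real.logb 10 (a + b * s) with hf
  have harg : ∀ s : ℝ, 0 ≤ s → 0 < a + b * s := fun s hs =>
    add_pos_of_pos_of_nonneg ha0 (mul_nonneg hb.le hs)
  -- strict monotonicity on [0, ∞)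
  have hmono : ∀ x y : ℝ, 0 ≤ x → 0 ≤ y → x < y → f x < f y := by
    intro x y hx hy hxy
    have h1 : a + b * x ≤ a + b * y := by nlinarith
    have h2 : Real.logb 10 (a + b * x) ≤ Real.logb 10 (a + b * y) :=
      Real.logb_le_logb_of_le h10 (harg x hx) h1
    simp only [hf]
    nlinarith
  -- f 0 < 0
  have hf0 : f 0 < 0 := by
    have h2 : Real.logb 10 a < 0 := Real.logb_neg h10 ha0 ha1
    simp only [hf, mul_zero, add_zero, zero_add]
    nlinarith
  -- f M > 0 for M = 1 - 2 * logb 10 a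
  set M : ℝ := 1 - 2 * Real.logb 10 a with hM
  have hla : Real.logb 10 a < 0 := Real.logb_neg h10 ha0 ha1
  have hM0 : 0 < M := by nlinarith
  have hfM : 0 < f M := by
    have h1 : a ≤ a + b * M := by nlinarith
    have h2 : Real.logb 10 a ≤ Real.logb 10 (a + b * M) :=
      Real.logb_le_logb_of_le h10 ha0 h1
    simp only [hf]
    nlinarith
  -- continuity of f on [0, M]
  have hcont : ContinuousOn f (Set.Icc 0 M) := by
    apply ContinuousOn.add continuousOn_id
    apply ContinuousOn.mul continuousOn_const
    intro x hx
    apply ContinuousAt.continuousWithinAt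
    have hx0 : (0:ℝ) < a + b * x := harg x hx.1
    have hc : ContinuousAt (fun x : ℝ => a + b * x) x := by fun_prop
    exact ContinuousAt.comp (f := fun x : ℝ => a + b * x)
      (Real.continuousAt_logb (ne_of_gt hx0)) hc
  -- IVT
  have hiv : (0:ℝ) ∈ Set.Icc (f 0) (f M) := ⟨hf0.le, hfM.le⟩
  obtain ⟨s, hsmem, hs⟩ := intermediate_value_Icc hM0.le hcont hiv
  have hs0 : 0 < s := by
    rcases lt_or_eq_of_le hsmem.1 with h | h
    · exact h
    · exfalso; rw [← h] at hs; linarith [hf0, hs]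
  refine ⟨s, ⟨hs0, by simp only [hf] at hs; linarith⟩, ?_⟩
  rintro t ⟨ht0, hteq⟩
  have hft : f t = 0 := by simp only [hf]; linarith
  have hfs : f s = 0 := hs
  by_contra hne
  rcases lt_or_gt_of_ne hne with h | h
  · have := hmono t s ht0.le hs0.le h; rw [hft, hfs] at this; exact lt_irrefl 0 this
  · have := hmono s t hs0.le ht0.le h; rw [hft, hfs] at this; exact lt_irrefl 0 this
end

section
/- For 0 < a < 1 and b > 0, let s(a, b) denote the unique positive solution of s = −2 · log₁₀(a + b·s). If 0 < a₁ ≤ a₂ < 1 and 0 < b₁ ≤ b₂ with (a₁, b₁) ≠ (a₂, b₂), then s(a₂, b₂) < s(a₁, b₁). In particular, the Colebrook–White friction factor λ = s⁻² is strictly increasing in the relative roughness ε/(3.7 d) and strictly decreasing in the Reynolds number Re. -/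
/-- Strict monotonicity of the unique positive solution of the Colebrook–White
fixed-point equation `s = -2 * log₁₀ (a + b * s)`: if `a₁ ≤ a₂` and `b₁ ≤ b₂`
with `(a₁, b₁) ≠ (a₂, b₂)`, then the solution for `(a₂, b₂)` is strictly smaller
than the solution for `(a₁, b₁)`. -/
theorem colebrook_white_solution_antitone
    (a₁ a₂ b₁ b₂ s₁ s₂ : ℝ)
    (ha₁ : 0 < a₁) (ha : a₁ ≤ a₂) (ha₂ : a₂ < 1)
    (hb₁ : 0 < b₁) (hb : b₁ ≤ b₂)
    (hne : (a₁, b₁) ≠ (a₂, b₂))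
    (hs₁pos : 0 < s₁) (hs₁ : s₁ = -2 * Real.logb 10 (a₁ + b₁ * s₁))
    (hs₂pos : 0 < s₂) (hs₂ : s₂ = -2 * Real.logb 10 (a₂ + b₂ * s₂)) :
    s₂ < s₁ := by
  by_contra h
  push_neg at h
  have key : a₁ + b₁ * s₁ < a₂ + b₂ * s₂ := by
    rcases ha.lt_or_eq with h' | rfl
    · have : b₁ * s₁ ≤ b₂ * s₂ :=
        mul_le_mul hb h hs₁pos.le (hb₁.trans_le hb).le
      linarith
    · have hbne : b₁ ≠ b₂ := by
        intro hbe
        exact hne (by rw [hbe])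
      have hb' : b₁ < b₂ := lt_of_le_of_ne hb hbne
      have h1 : b₁ * s₁ ≤ b₁ * s₂ := by nlinarith
      have h2 : b₁ * s₂ < b₂ * s₂ := by nlinarith
      linarith
  have hpos : 0 < a₁ + b₁ * s₁ := by positivity
  have hlog : Real.logb 10 (a₁ + b₁ * s₁) < Real.logb 10 (a₂ + b₂ * s₂) :=
    Real.logb_lt_logb (by norm_num) hpos key
  linarith
end

section
/- Fix 0 < a < 1 and c > 0. For each q > 0 let s(q) denote the unique positive solution of s = −2 · log₁₀(a + c·s/q). Then the map q ↦ q / s(q) is strictly increasing on (0, ∞). Consequently, the friction pressure drop λ(q)·q², with λ(q) = s(q)⁻² the Colebrook–White friction factor at Reynolds number proportional to q, is strictly increasing in the mass flow q. -/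
/-- Fix `0 < a < 1` and `c > 0`, and for `q > 0` let `s q` be the unique positive
solution of `s = -2 * log₁₀ (a + c * s / q)`. Then `q ↦ q / s q` is strictly
increasing, i.e. for positive solutions `s₁` at `q₁` and `s₂` at `q₂` with
`0 < q₁ < q₂` we have `q₁ / s₁ < q₂ / s₂`. -/
theorem colebrook_white_flow_over_solution_strictMono
    (a c : ℝ) (ha0 : 0 < a) (ha1 : a < 1) (hc : 0 < c)
    (q₁ q₂ s₁ s₂ : ℝ)
    (hq₁ : 0 < q₁) (hq : q₁ < q₂)
    (hs₁pos : 0 < s₁) (hs₁ : s₁ = -2 * Real.logb 10 (a + c * s₁ / q₁))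
    (hs₂pos : 0 < s₂) (hs₂ : s₂ = -2 * Real.logb 10 (a + c * s₂ / q₂)) :
    q₁ / s₁ < q₂ / s₂ := by
  by_contra hcon
  push_neg at hcon
  have hq₂ : 0 < q₂ := hq₁.trans hq
  have h1 : s₁ / q₁ ≤ s₂ / q₂ := by
    rw [div_le_div_iff₀ hq₁ hq₂]
    rw [div_le_div_iff₀ hs₂pos hs₁pos] at hcon
    linarith
  have harg : a + c * s₁ / q₁ ≤ a + c * s₂ / q₂ := by
    have := mul_le_mul_of_nonneg_left h1 hc.le
    rw [mul_div_assoc, mul_div_assoc]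
    linarith
  have h2 : Real.logb 10 (a + c * s₁ / q₁) ≤ Real.logb 10 (a + c * s₂ / q₂) := by
    gcongr
    norm_num
  have h3 : s₂ ≤ s₁ := by rw [hs₁, hs₂]; linarith
  have : q₁ / s₁ < q₂ / s₂ := by gcongr
  exact absurd this (not_lt.mpr hcon)
end
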